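/- Let q ≥ 2 and let y ∈ M̃_≤^{q−1} be nonzero. Then the minimum over all w ∈ ℝ^q with w_1 + … + w_q = 0 and ‖w‖ = ‖y‖ of the quantity max_{σ ∈ S_q} Σ_{i=1}^q y_{σ(i)} w_i equals ‖y‖ · min_{1≤k≤q−1} ⟨y, z_k^q⟩. (Equivalently, the largest-empty-cap parameter of the set of permutations of y is t(Π(y)) = (1/‖y‖) · min_{1≤k≤q−1} ⟨y, z_k^q⟩.) -/

import Mathlib

open MeasureTheory Filter

open Finset
set_option linter.unusedSectionVars false

/-- The unit vector `z_k^q ∈ ℝ^q` whose first `k` coordinates equal `-√((q-k)/(qk))` and whose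
last `q-k` coordinates equal `√(k/(q(q-k)))`. -/
noncomputable def zvec (q k : ℕ) : EuclideanSpace ℝ (Fin q) := WithLp.toLp 2 fun (i : Fin q) =>
  if (i : ℕ) < k then -Real.sqrt (((q : ℝ) - k) / (q * k))
  else Real.sqrt ((k : ℝ) / (q * ((q : ℝ) - k)))

/-- extend a `Fin q` vector to `ℕ` by zero -/
noncomputable def extq (q : ℕ) (u : Fin q → ℝ) : ℕ → ℝ := fun n =>
  if h : n < q then u ⟨n, h⟩ else 0

lemma extq_lt {q : ℕ} (u : Fin q → ℝ) {n : ℕ} (h : n < q) : extq q u n = u ⟨n, h⟩ := dif_pos h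

lemma sum_fin_eq_range (q : ℕ) (u : Fin q → ℝ) :
    ∑ i : Fin q, u i = ∑ i ∈ range q, extq q u i := by
  rw [← Fin.sum_univ_eq_sum_range (fun i => extq q u i) q]
  exact Finset.sum_congr rfl fun i _ => by rw [extq_lt u i.isLt]

lemma range_split (q m : ℕ) (hm : m ≤ q) (f : ℕ → ℝ) :
    ∑ i ∈ range q, f i = ∑ i ∈ range m, f i + ∑ i ∈ Ico m q, f i := by
  rw [range_eq_Ico, ← Finset.sum_Ico_consecutive _ (Nat.zero_le m) hm, range_eq_Ico]

noncomputable def Jv (q m : ℕ) : ℝ := Real.sqrt q / (Real.sqrt m * Real.sqrt ((q : ℝ) - m))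

section entries
variable {q m : ℕ} (hm1 : 1 ≤ m) (hmq : m < q)
include hm1 hmq

lemma qm_pos : (0:ℝ) < (q:ℝ) - m := by
  have : (m:ℝ) < q := by exact_mod_cast hmq
  linarith

lemma entry_neg : Real.sqrt (((q:ℝ) - m) / (q * m))
    = Real.sqrt ((q:ℝ) - m) / (Real.sqrt q * Real.sqrt m) := by
  rw [Real.sqrt_div (le_of_lt (qm_pos hm1 hmq)), Real.sqrt_mul (by positivity)]

lemma entry_pos : Real.sqrt ((m:ℝ) / (q * ((q:ℝ) - m)))
    = Real.sqrt m / (Real.sqrt q * Real.sqrt ((q:ℝ) - m)) := by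
  rw [Real.sqrt_div (by positivity), Real.sqrt_mul (by positivity)]

lemma sqrt_m_pos : (0:ℝ) < Real.sqrt m := Real.sqrt_pos.2 (by exact_mod_cast hm1)
lemma sqrt_qm_pos : (0:ℝ) < Real.sqrt ((q:ℝ) - m) := Real.sqrt_pos.2 (qm_pos hm1 hmq)
lemma sqrt_q_pos : (0:ℝ) < Real.sqrt q :=
  Real.sqrt_pos.2 (Nat.cast_pos.2 (lt_of_le_of_lt (Nat.zero_le m) hmq))

lemma Jv_pos : 0 < Jv q m :=
  div_pos (sqrt_q_pos hm1 hmq) (mul_pos (sqrt_m_pos hm1 hmq) (sqrt_qm_pos hm1 hmq))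

end entries


section zlem
variable {q m : ℕ} (hm1 : 1 ≤ m) (hmq : m < q)
include hm1 hmq

lemma sum_mul_zvec (u : Fin q → ℝ) :
    ∑ i : Fin q, u i * zvec q m i
      = -(Real.sqrt ((q:ℝ)-m) / (Real.sqrt q * Real.sqrt m)) * ∑ i ∈ range m, extq q u i
        + Real.sqrt m / (Real.sqrt q * Real.sqrt ((q:ℝ)-m)) * ∑ i ∈ Ico m q, extq q u i := by
  have h1 : ∑ i : Fin q, u i * zvec q m i
      = ∑ i ∈ range q, (extq q u i * (if i < m then
          -(Real.sqrt ((q:ℝ)-m) / (Real.sqrt q * Real.sqrt m))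
          else Real.sqrt m / (Real.sqrt q * Real.sqrt ((q:ℝ)-m)))) := by
    rw [← Fin.sum_univ_eq_sum_range]
    refine Finset.sum_congr rfl fun i _ => ?_
    rw [extq_lt u i.isLt]
    show u i * zvec q m i = _
    simp only [zvec, WithLp.ofLp_toLp, entry_neg hm1 hmq, entry_pos hm1 hmq]
  rw [h1, range_split q m (le_of_lt hmq), Finset.mul_sum, Finset.mul_sum]
  congr 1
  · refine Finset.sum_congr rfl fun i hi => ?_
    rw [if_pos (mem_range.1 hi)]; ring
  · refine Finset.sum_congr rfl fun i hi => ?_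
    rw [if_neg (not_lt.2 (mem_Ico.1 hi).1)]; ring

lemma inner_zvec (u : Fin q → ℝ) (hu : ∑ i, u i = 0) :
    ∑ i : Fin q, u i * zvec q m i = Jv q m * (-(∑ i ∈ range m, extq q u i)) := by
  have hsplit : ∑ i ∈ range m, extq q u i + ∑ i ∈ Ico m q, extq q u i = 0 := by
    rw [← range_split q m hmq.le, ← sum_fin_eq_range, hu]
  have hico : ∑ i ∈ Ico m q, extq q u i = -∑ i ∈ range m, extq q u i := by linarith
  rw [sum_mul_zvec hm1 hmq u, hico, Jv]
  have hA := sqrt_m_pos hm1 hmq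
  have hB := sqrt_qm_pos hm1 hmq
  have hC := sqrt_q_pos hm1 hmq
  have hA2 : Real.sqrt m ^ 2 = (m:ℝ) := Real.sq_sqrt (by positivity)
  have hB2 : Real.sqrt ((q:ℝ)-m) ^ 2 = (q:ℝ)-m := Real.sq_sqrt (qm_pos hm1 hmq).le
  have hC2 : Real.sqrt q ^ 2 = (q:ℝ) := Real.sq_sqrt (by positivity)
  have h : Real.sqrt m ^ 2 + Real.sqrt ((q:ℝ)-m) ^ 2 = Real.sqrt q ^ 2 := by
    rw [hA2, hB2, hC2]; ring
  have hJ : Real.sqrt ((q:ℝ)-m)/(Real.sqrt q * Real.sqrt m)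
      + Real.sqrt m/(Real.sqrt q * Real.sqrt ((q:ℝ)-m))
      = Real.sqrt q/(Real.sqrt m * Real.sqrt ((q:ℝ)-m)) := by
    rw [div_add_div _ _ (by positivity) (by positivity),
      div_eq_div_iff (by positivity) (by positivity)]
    linear_combination (Real.sqrt q * Real.sqrt m * Real.sqrt ((q:ℝ)-m)) * h
  rw [← hJ]; ring

lemma zvec_sum_zero : ∑ i : Fin q, zvec q m i = 0 := by
  have h1 : ∑ i ∈ range m, extq q (fun _ => (1:ℝ)) i = (m:ℝ) := by
    rw [Finset.sum_congr rfl
      (fun i hi => extq_lt (fun _ => (1:ℝ)) (lt_of_lt_of_le (mem_range.1 hi) hmq.le))]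
    simp
  have h2 : ∑ i ∈ Ico m q, extq q (fun _ => (1:ℝ)) i = (q:ℝ) - m := by
    rw [Finset.sum_congr rfl (fun i hi => extq_lt (fun _ => (1:ℝ)) (mem_Ico.1 hi).2)]
    simp [Nat.cast_sub hmq.le]
  have h := sum_mul_zvec hm1 hmq (fun _ => (1:ℝ))
  simp only [one_mul] at h
  rw [h, h1, h2]
  have hA2 : Real.sqrt m ^ 2 = (m:ℝ) := Real.sq_sqrt (by positivity)
  have hB2 : Real.sqrt ((q:ℝ)-m) ^ 2 = (q:ℝ)-m := Real.sq_sqrt (qm_pos hm1 hmq).le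
  have key : ∀ A B C mm xx : ℝ, 0 < A → 0 < B → 0 < C → A^2 = mm → B^2 = xx →
      -(B/(C*A)) * mm + A/(C*B) * xx = 0 := by
    intro A B C mm xx hA hB hC h1 h2
    subst h1; subst h2; field_simp; ring
  exact key _ _ _ _ _ (sqrt_m_pos hm1 hmq) (sqrt_qm_pos hm1 hmq) (sqrt_q_pos hm1 hmq) hA2 hB2

lemma extq_zvec_lo {i : ℕ} (hi : i ∈ range m) :
    extq q (fun j => zvec q m j) i
      = -(Real.sqrt ((q:ℝ)-m) / (Real.sqrt q * Real.sqrt m)) := by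
  rw [extq_lt _ (lt_of_lt_of_le (mem_range.1 hi) hmq.le)]
  show zvec q m _ = _
  simp only [zvec, WithLp.ofLp_toLp, entry_neg hm1 hmq]
  rw [if_pos (mem_range.1 hi)]

lemma extq_zvec_hi {i : ℕ} (hi : i ∈ Ico m q) :
    extq q (fun j => zvec q m j) i
      = Real.sqrt m / (Real.sqrt q * Real.sqrt ((q:ℝ)-m)) := by
  rw [extq_lt _ (mem_Ico.1 hi).2]
  show zvec q m _ = _
  simp only [zvec, WithLp.ofLp_toLp, entry_pos hm1 hmq]
  rw [if_neg (not_lt.2 (mem_Ico.1 hi).1)]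

lemma zvec_sq_sum : ∑ i : Fin q, zvec q m i * zvec q m i = 1 := by
  have h := sum_mul_zvec hm1 hmq (fun j => zvec q m j)
  rw [h, Finset.sum_congr rfl (fun i hi => extq_zvec_lo hm1 hmq hi),
    Finset.sum_congr rfl (fun i hi => extq_zvec_hi hm1 hmq hi),
    Finset.sum_const, Finset.sum_const, card_range, Nat.card_Ico]
  have hA2 : Real.sqrt m ^ 2 = (m:ℝ) := Real.sq_sqrt (by positivity)
  have hB2 : Real.sqrt ((q:ℝ)-m) ^ 2 = (q:ℝ)-m := Real.sq_sqrt (qm_pos hm1 hmq).le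
  have hC2 : Real.sqrt q ^ 2 = (q:ℝ) := Real.sq_sqrt (by positivity)
  have hA := sqrt_m_pos hm1 hmq
  have hB := sqrt_qm_pos hm1 hmq
  have hC := sqrt_q_pos hm1 hmq
  have hcast : ((q - m : ℕ) : ℝ) = (q:ℝ) - m := Nat.cast_sub hmq.le
  rw [nsmul_eq_mul, nsmul_eq_mul, hcast]
  have hq3 : Real.sqrt m ^ 2 + Real.sqrt ((q:ℝ)-m) ^ 2 = Real.sqrt q ^ 2 := by
    rw [hA2, hB2, hC2]; ring
  have key : ∀ A B C mm xx : ℝ, 0 < A → 0 < B → 0 < C → A^2 = mm → B^2 = xx →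
      A^2 + B^2 = C^2 →
      -(B/(C*A)) * (mm * -(B/(C*A))) + A/(C*B) * (xx * (A/(C*B))) = 1 := by
    intro A B C mm xx hA hB hC h1 h2 h3
    subst h1; subst h2; field_simp
    linear_combination h3
  exact key _ _ _ _ _ hA hB hC hA2 hB2 hq3

end zlem

lemma abel_id (q : ℕ) (u v : Fin q → ℝ) (hu : ∑ i, u i = 0) :
    ∑ i, u i * v i = ∑ k ∈ range (q-1),
      (extq q v (k+1) - extq q v k) * (-(∑ j ∈ range (k+1), extq q u j)) := by
  have h := Finset.sum_range_by_parts (extq q v) (extq q u) q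
  have h0 : ∑ i ∈ range q, extq q u i = 0 := by rw [← sum_fin_eq_range]; exact hu
  have hl : ∑ i : Fin q, u i * v i = ∑ i ∈ range q, extq q v i • extq q u i := by
    rw [← Fin.sum_univ_eq_sum_range (fun n => extq q v n • extq q u n) q]
    exact Finset.sum_congr rfl fun i _ => by
      rw [extq_lt u i.isLt, extq_lt v i.isLt, smul_eq_mul]; ring
  rw [hl, h, h0, smul_zero, zero_sub, ← Finset.sum_neg_distrib]
  exact Finset.sum_congr rfl fun k _ => by rw [smul_eq_mul]; ring

lemma prefix_nonpos {q m : ℕ} (hmq : m < q) (y : Fin q → ℝ)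
    (hmono : ∀ i j : Fin q, i ≤ j → y i ≤ y j) (hsum : ∑ i, y i = 0) :
    ∑ i ∈ range m, extq q y i ≤ 0 := by
  set p : Fin q := ⟨m, hmq⟩ with hp
  have hA : ∑ i ∈ range m, extq q y i ≤ (m:ℝ) * y p := by
    calc ∑ i ∈ range m, extq q y i ≤ ∑ _i ∈ range m, y p := by
          refine Finset.sum_le_sum fun i hi => ?_
          rw [extq_lt y (lt_trans (mem_range.1 hi) hmq)]
          exact hmono _ p (Fin.mk_le_mk.2 (le_of_lt (mem_range.1 hi)))
      _ = (m:ℝ) * y p := by rw [Finset.sum_const, card_range, nsmul_eq_mul]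
  have hB : ((q:ℝ) - m) * y p ≤ ∑ i ∈ Ico m q, extq q y i := by
    calc ((q:ℝ)-m) * y p = ∑ _i ∈ Ico m q, y p := by
          rw [Finset.sum_const, Nat.card_Ico, nsmul_eq_mul, Nat.cast_sub hmq.le]
      _ ≤ ∑ i ∈ Ico m q, extq q y i := by
          refine Finset.sum_le_sum fun i hi => ?_
          rw [extq_lt y (mem_Ico.1 hi).2]
          exact hmono p _ (Fin.mk_le_mk.2 (mem_Ico.1 hi).1)
  have h0 : ∑ i ∈ range m, extq q y i + ∑ i ∈ Ico m q, extq q y i = 0 := by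
    rw [← range_split q m hmq.le, ← sum_fin_eq_range, hsum]
  have hqm : (m:ℝ) < q := by exact_mod_cast hmq
  have hm0 : (0:ℝ) ≤ m := by positivity
  rcases le_or_gt 0 (y p) with h|h
  · nlinarith
  · nlinarith


/-- Lemma 2.3, equation (36): for nonzero `y` with increasing coordinates summing to zero,
the minimum over `w` (with `Σ w_i = 0`, `‖w‖ = ‖y‖`) of `max_{σ} Σ_i y_{σ(i)} w_i` is attained
and equals `‖y‖ · min_{1 ≤ k ≤ q-1} ⟨y, z_k^q⟩`. -/
theorem stmt3 (q : ℕ) (hq : 2 ≤ q) (y : EuclideanSpace ℝ (Fin q)) (hy : y ≠ 0)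
    (hmono : ∀ i j : Fin q, i ≤ j → y i ≤ y j) (hsum : ∑ i, y i = 0) :
    IsLeast
      {m : ℝ | ∃ w : EuclideanSpace ℝ (Fin q), (∑ i, w i = 0) ∧ ‖w‖ = ‖y‖ ∧
        m = ⨆ σ : Equiv.Perm (Fin q), ∑ i, y (σ i) * w i}
      (‖y‖ * ⨅ k : Fin (q - 1), ∑ i, y i * zvec q ((k : ℕ) + 1) i) := by
  classical
  have hne : Nonempty (Fin (q-1)) := ⟨⟨0, by omega⟩⟩
  set N := ‖y‖ with hN
  set g : Fin (q-1) → ℝ := fun k => ∑ i, y i * zvec q ((k:ℕ)+1) i with hgdef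
  obtain ⟨k₀, hk₀⟩ := Finite.exists_min g
  have hInf : (⨅ k, g k) = g k₀ :=
    le_antisymm (ciInf_le (Finite.bddBelow_range g) k₀) (le_ciInf hk₀)
  have hkk : ∀ k : Fin (q-1), (k:ℕ)+1 < q := fun k => by have := k.2; omega
  have hk1 : ∀ k : Fin (q-1), 1 ≤ (k:ℕ)+1 := fun k => Nat.le_add_left 1 _
  have hgk : ∀ k : Fin (q-1),
      g k = Jv q ((k:ℕ)+1) * (-(∑ i ∈ range ((k:ℕ)+1), extq q y i)) :=
    fun k => inner_zvec (hk1 k) (hkk k) y hsum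
  have hg0 : ∀ k, 0 ≤ g k := fun k => by
    rw [hgk k]
    refine mul_nonneg (Jv_pos (hk1 k) (hkk k)).le ?_
    have := prefix_nonpos (hkk k) y hmono hsum
    linarith
  have hNpos : 0 < N := by rw [hN]; exact norm_pos_iff.2 hy
  have hy2 : ∑ i, (y i)^2 = N^2 := by
    rw [hN, EuclideanSpace.norm_eq, Real.sq_sqrt (by positivity)]
    exact Finset.sum_congr rfl fun i _ => by rw [Real.norm_eq_abs, sq_abs]
  -- monotonicity of zvec
  have hzmono : ∀ (m : ℕ) (i j : Fin q), i ≤ j → zvec q m i ≤ zvec q m j := by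
    intro m i j hij
    show (if (i:ℕ) < m then -Real.sqrt (((q:ℝ)-m)/(q*m)) else Real.sqrt ((m:ℝ)/(q*((q:ℝ)-m))))
      ≤ (if (j:ℕ) < m then -Real.sqrt (((q:ℝ)-m)/(q*m)) else Real.sqrt ((m:ℝ)/(q*((q:ℝ)-m))))
    have hab : -Real.sqrt (((q:ℝ)-m)/(q*m)) ≤ Real.sqrt ((m:ℝ)/(q*((q:ℝ)-m))) :=
      le_trans (neg_nonpos.2 (Real.sqrt_nonneg _)) (Real.sqrt_nonneg _)
    by_cases hjm : (j:ℕ) < m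
    · have him : (i:ℕ) < m := lt_of_le_of_lt (Fin.le_def.1 hij) hjm
      rw [if_pos him, if_pos hjm]
    · rw [if_neg hjm]
      by_cases him : (i:ℕ) < m
      · rw [if_pos him]; exact hab
      · rw [if_neg him]
  constructor
  · -- membership
    refine ⟨(N • zvec q ((k₀:ℕ)+1) : EuclideanSpace ℝ (Fin q)), ?_, ?_, ?_⟩
    · show ∑ i, N * zvec q ((k₀:ℕ)+1) i = 0
      rw [← Finset.mul_sum, zvec_sum_zero (hk1 k₀) (hkk k₀), mul_zero]
    · rw [norm_smul, Real.norm_eq_abs, abs_of_pos hNpos]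
      have hz1 : ‖zvec q ((k₀:ℕ)+1)‖ = 1 := by
        rw [EuclideanSpace.norm_eq]
        have : ∑ i, ‖zvec q ((k₀:ℕ)+1) i‖^2 = 1 := by
          rw [← zvec_sq_sum (hk1 k₀) (hkk k₀)]
          exact Finset.sum_congr rfl fun i _ => by
            rw [Real.norm_eq_abs, sq_abs, sq]
        rw [this, Real.sqrt_one]
      rw [hz1, mul_one]
    · set w : EuclideanSpace ℝ (Fin q) := N • zvec q ((k₀:ℕ)+1) with hw
      have hwmono : ∀ i j : Fin q, i ≤ j → w i ≤ w j := fun i j hij => by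
        show N * zvec q ((k₀:ℕ)+1) i ≤ N * zvec q ((k₀:ℕ)+1) j
        exact mul_le_mul_of_nonneg_left (hzmono _ i j hij) hNpos.le
      have hmv : Monovary y w := fun i j hlt => by
        rcases le_total i j with h|h
        · exact hmono i j h
        · exact absurd (hwmono j i h) (not_le.2 hlt)
      have hsup : (⨆ σ : Equiv.Perm (Fin q), ∑ i, y (σ i) * w i) = ∑ i, y i * w i := by
        apply le_antisymm
        · exact ciSup_le fun σ => hmv.sum_comp_perm_mul_le_sum_mul
        · have := le_ciSup (f := fun σ : Equiv.Perm (Fin q) => ∑ i, y (σ i) * w i)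
            (Finite.bddAbove_range _) (1 : Equiv.Perm (Fin q))
          simpa using this
      rw [hsup, hInf]
      have : ∑ i, y i * w i = N * g k₀ := by
        rw [hgdef, Finset.mul_sum]
        exact Finset.sum_congr rfl fun i _ => by
          show y i * (N * zvec q ((k₀:ℕ)+1) i) = _
          ring
      rw [this]
  · -- lower bound
    rintro t ⟨w, hw0, hwn, rfl⟩
    set τ := Tuple.sort w with hτ
    set v : Fin q → ℝ := fun i => w (τ i) with hv
    have hvmono : ∀ i j : Fin q, i ≤ j → v i ≤ v j := fun i j h =>
      Tuple.monotone_sort w h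
    have hvsum : ∑ i, v i = 0 := by
      rw [hv]; rw [Equiv.sum_comp τ w]; exact hw0
    have hw2 : ∑ i, (w i)^2 = N^2 := by
      rw [← hwn, EuclideanSpace.norm_eq, Real.sq_sqrt (by positivity)]
      exact Finset.sum_congr rfl fun i _ => by rw [Real.norm_eq_abs, sq_abs]
    have hv2 : ∑ i, (v i)^2 = N^2 := by
      rw [hv]
      rw [Equiv.sum_comp τ (fun i => (w i)^2)]
      exact hw2
    set c : ℕ → ℝ := fun k => (extq q v (k+1) - extq q v k) / Jv q (k+1) with hc
    have hkr : ∀ k ∈ range (q-1), 1 ≤ k+1 ∧ k+1 < q := fun k hk =>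
      ⟨Nat.le_add_left 1 k, by have := mem_range.1 hk; omega⟩
    have hJp : ∀ k ∈ range (q-1), 0 < Jv q (k+1) := fun k hk =>
      Jv_pos (hkr k hk).1 (hkr k hk).2
    have hc0 : ∀ k ∈ range (q-1), 0 ≤ c k := by
      intro k hk
      have h2 : k+1 < q := (hkr k hk).2
      have h3 : k < q := by omega
      have hnum : extq q v k ≤ extq q v (k+1) := by
        rw [extq_lt v h3, extq_lt v h2]
        exact hvmono _ _ (Fin.mk_le_mk.2 (Nat.le_succ k))
      exact div_nonneg (by linarith) (hJp k hk).le
    have hdelta : ∀ k ∈ range (q-1),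
        extq q v (k+1) - extq q v k = c k * Jv q (k+1) := by
      intro k hk
      rw [hc, div_mul_cancel₀ _ (hJp k hk).ne']
    have hay : ∑ i, y i * v i = ∑ k ∈ range (q-1),
        c k * (Jv q (k+1) * (-(∑ j ∈ range (k+1), extq q y j))) := by
      rw [abel_id q y v hsum]
      refine Finset.sum_congr rfl fun k hk => ?_
      rw [hdelta k hk]; ring
    have hbr : ∀ k (hk : k ∈ range (q-1)),
        Jv q (k+1) * (-(∑ j ∈ range (k+1), extq q y j)) = g ⟨k, mem_range.1 hk⟩ := by
      intro k hk; rw [hgk ⟨k, mem_range.1 hk⟩]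
    have hav : ∑ i, v i * v i = ∑ k ∈ range (q-1),
        c k * (Jv q (k+1) * (-(∑ j ∈ range (k+1), extq q v j))) := by
      rw [abel_id q v v hvsum]
      exact Finset.sum_congr rfl fun k hk => by rw [hdelta k hk]; ring
    have hvv : ∑ i, v i * v i = N^2 := by
      rw [← hv2]; exact Finset.sum_congr rfl fun i _ => (pow_two (v i)).symm
    have hcs : ∀ k ∈ range (q-1),
        Jv q (k+1) * (-(∑ j ∈ range (k+1), extq q v j)) ≤ N := by
      intro k hk
      have h1 : ∑ i, v i * zvec q (k+1) i
          = Jv q (k+1) * (-(∑ j ∈ range (k+1), extq q v j)) :=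
        inner_zvec (hkr k hk).1 (hkr k hk).2 v hvsum
      have h2 := Finset.sum_mul_sq_le_sq_mul_sq Finset.univ (fun i : Fin q => v i)
        (fun i => zvec q (k+1) i)
      have h3 : ∑ i, (zvec q (k+1) i)^2 = 1 := by
        rw [← zvec_sq_sum (hkr k hk).1 (hkr k hk).2]
        exact Finset.sum_congr rfl fun i _ => pow_two _
      simp only [h3, hv2, mul_one] at h2
      rw [← h1]
      nlinarith [h2, hNpos]
    have hsumc : N ≤ ∑ k ∈ range (q-1), c k := by
      have h4 : N^2 ≤ (∑ k ∈ range (q-1), c k) * N := by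
        rw [← hvv, hav]
        calc ∑ k ∈ range (q-1), c k * (Jv q (k+1) * (-(∑ j ∈ range (k+1), extq q v j)))
            ≤ ∑ k ∈ range (q-1), c k * N :=
              Finset.sum_le_sum fun k hk =>
                mul_le_mul_of_nonneg_left (hcs k hk) (hc0 k hk)
          _ = (∑ k ∈ range (q-1), c k) * N := by rw [← Finset.sum_mul]
      nlinarith [h4, hNpos]
    have hmain : N * g k₀ ≤ ∑ i, y i * v i := by
      rw [hay]
      calc N * g k₀ ≤ (∑ k ∈ range (q-1), c k) * g k₀ :=
            mul_le_mul_of_nonneg_right hsumc (hg0 k₀)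
        _ = ∑ k ∈ range (q-1), c k * g k₀ := by rw [Finset.sum_mul]
        _ ≤ ∑ k ∈ range (q-1), c k * (Jv q (k+1) * (-(∑ j ∈ range (k+1), extq q y j))) :=
            Finset.sum_le_sum fun k hk =>
              mul_le_mul_of_nonneg_left
                (by rw [hbr k hk]; exact hk₀ ⟨k, mem_range.1 hk⟩) (hc0 k hk)
    have hre : ∑ i, y i * v i = ∑ i, y (τ⁻¹ i) * w i := by
      rw [← Equiv.sum_comp τ (fun i => y (τ⁻¹ i) * w i)]
      exact Finset.sum_congr rfl fun i _ => by
        rw [hv, ← Equiv.Perm.mul_apply, inv_mul_cancel, Equiv.Perm.one_apply]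
    have hfin : ∑ i, y (τ⁻¹ i) * w i ≤ ⨆ σ : Equiv.Perm (Fin q), ∑ i, y (σ i) * w i :=
      le_ciSup (f := fun σ : Equiv.Perm (Fin q) => ∑ i, y (σ i) * w i)
        (Finite.bddAbove_range _) τ⁻¹
    rw [hInf]
    calc N * g k₀ ≤ ∑ i, y i * v i := hmain
      _ = ∑ i, y (τ⁻¹ i) * w i := hre
      _ ≤ _ := hfin
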